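/- arXiv:2506.12397 — 3 statements merged into one kernel-verified Lean document; each statement's English description precedes it below -/
import Mathlib

section
/- In the block composite setting, fix x ∈ E, a block index i, and β > 0, and let s₊ be a global minimizer over ℝ^{n_i} of q_β(s) = φ̄^i(s;x) + (β/2)‖s − x^i‖². Set x₊ = x[i↦s₊]. Then φ̄^i(s₊;x) ≤ φ(x) − Σ_{j≠i} g_j(x^j) − β‖x₊ − x‖². -/
/-!
The block model `φ̄^i(·;x)` is convex (convex `h` and `g_i` composed with affine maps, plus an
affine term), so `q_β` is `β`-strongly convex, and a strongly convex function grows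
quadratically away from its minimizer:
`q_β(s₊) + (β/2)‖x^i − s₊‖² ≤ q_β(x^i) = f(x) + h(F(x)) + g_i(x^i)`.
The two halves of `β‖s₊ − x^i‖² = β‖x₊ − x‖²` come from the regularizer in `q_β(s₊)` and from
this growth.
-/

open Set Filter Topology
open scoped RealInnerProductSpace

/-- `upd x i s` is `x` with its `i`-th block replaced by `s`, in the Euclidean
product space `E = ℝ^{n 0} × ⋯ × ℝ^{n (b-1)}`. -/
noncomputable def upd {b : ℕ} {n : Fin b → ℕ}
    (x : PiLp 2 (fun i => EuclideanSpace ℝ (Fin (n i)))) (i : Fin b)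
    (s : EuclideanSpace ℝ (Fin (n i))) :
    PiLp 2 (fun i => EuclideanSpace ℝ (Fin (n i))) :=
  WithLp.toLp 2 (Function.update x i s)

theorem StrongConvexOn.add_sq_norm_sub_le_of_isMinOn {E : Type*} [NormedAddCommGroup E]
    [NormedSpace ℝ E] {s : Set E} {q : E → ℝ} {β : ℝ} {a t : E} (hq : StrongConvexOn s β q)
    (hmin : IsMinOn q s a) (ha : a ∈ s) (ht : t ∈ s) :
    q a + β / 2 * ‖t - a‖ ^ 2 ≤ q t := by
  have along_segment : ∀ θ ∈ Ioo (0 : ℝ) 1,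
      q a + (1 - θ) * (β / 2 * ‖t - a‖ ^ 2) ≤ q t := by
    rintro θ ⟨hθ0, hθ1⟩
    have hcoef : (1 - θ) + θ = 1 := sub_add_cancel 1 θ
    have hmid := hq.2 ha ht (sub_pos.2 hθ1).le hθ0.le hcoef
    have hle : q a ≤ q ((1 - θ) • a + θ • t) := hmin (hq.1 ha ht (sub_pos.2 hθ1).le hθ0.le hcoef)
    simp only [smul_eq_mul, norm_sub_rev a t] at hmid
    have hθ : θ * (q a + (1 - θ) * (β / 2 * ‖t - a‖ ^ 2)) ≤ θ * q t := by nlinarith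
    exact le_of_mul_le_mul_left hθ hθ0
  have hlim : Tendsto (fun θ : ℝ => q a + (1 - θ) * (β / 2 * ‖t - a‖ ^ 2)) (𝓝[>] 0)
      (𝓝 (q a + β / 2 * ‖t - a‖ ^ 2)) :=
    tendsto_nhdsWithin_of_tendsto_nhds ((by fun_prop : Continuous _).tendsto' _ _ (by simp))
  exact le_of_tendsto hlim (eventually_of_mem (Ioo_mem_nhdsGT one_pos) along_segment)

theorem ConvexOn.strongConvexOn_add_sq_norm_sub {E : Type*} [NormedAddCommGroup E]
    [InnerProductSpace ℝ E] {s : Set E} {φ : E → ℝ} (hφ : ConvexOn ℝ s φ) (β : ℝ) (c : E) :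
    StrongConvexOn s β (fun x => φ x + β / 2 * ‖x - c‖ ^ 2) := by
  rw [strongConvexOn_iff_convex]
  refine (hφ.add (((innerₗ E (-β • c)).convexOn hφ.1).add_const (β / 2 * ‖c‖ ^ 2))).congr ?_
  intro x _
  simp only [Pi.add_apply, innerₗ_apply_apply, real_inner_smul_left, norm_sub_sq_real,
    real_inner_comm c x]
  ring

theorem convexOn_linearized_model {E V : Type*} [NormedAddCommGroup E] [InnerProductSpace ℝ E]
    [AddCommGroup V] [Module ℝ V] {h : V → ℝ} {g : E → ℝ} (hh : ConvexOn ℝ univ h)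
    (hg : ConvexOn ℝ univ g) (a : ℝ) (v : E) (u : V) (A : E →ₗ[ℝ] V) (x₀ : E) :
    ConvexOn ℝ univ (fun s => a + ⟪v, s - x₀⟫ + h (u + A (s - x₀)) + g s) := by
  have hinner : ConvexOn ℝ univ (fun s => ⟪v, s - x₀⟫) :=
    (((innerₗ E v).convexOn convex_univ).add_const (-⟪v, x₀⟫)).congr fun s _ => by
      simp only [Pi.add_apply, innerₗ_apply_apply, inner_sub_right]; ring
  have hcomp : ConvexOn ℝ univ (fun s => h (u + A (s - x₀))) :=
    hh.comp_affineMap ⟨fun s => u + A (s - x₀), A, fun p w => by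
      simp only [vadd_eq_add, map_sub, map_add]; abel⟩
  exact (((convexOn_const a convex_univ).add hinner).add hcomp).add hg

theorem norm_upd_sub {b : ℕ} {n : Fin b → ℕ} (x : PiLp 2 (fun i => EuclideanSpace ℝ (Fin (n i))))
    (i : Fin b) (s : EuclideanSpace ℝ (Fin (n i))) : ‖upd x i s - x‖ = ‖s - x i‖ := by
  rw [← sq_eq_sq₀ (norm_nonneg _) (norm_nonneg _), PiLp.norm_sq_eq_of_L2,
    Finset.sum_eq_single_of_mem i (Finset.mem_univ i)]
  · simp [upd]
  · intro j _ hj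
    simp [upd, Function.update_of_ne hj]

theorem model_decrease_at_minimizer_general
    {b m : ℕ} {n : Fin b → ℕ}
    (f : PiLp 2 (fun i => EuclideanSpace ℝ (Fin (n i))) → ℝ)
    (F : PiLp 2 (fun i => EuclideanSpace ℝ (Fin (n i))) → EuclideanSpace ℝ (Fin m))
    (h : EuclideanSpace ℝ (Fin m) → ℝ)
    (hhconv : ConvexOn ℝ Set.univ h)
    (g : (i : Fin b) → EuclideanSpace ℝ (Fin (n i)) → ℝ)
    (hg : ∀ i, ConvexOn ℝ Set.univ (g i))
    (x : PiLp 2 (fun i => EuclideanSpace ℝ (Fin (n i)))) (i : Fin b)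
    (β : ℝ)
    -- `gif = ∇_i f(x)` is the gradient at `x^i` of `s ↦ f(x[i ↦ s])`
    (gif : EuclideanSpace ℝ (Fin (n i)))
    -- `GiF = ∇_i F(x)` is the Fréchet derivative at `x^i` of `s ↦ F(x[i ↦ s])`
    (GiF : EuclideanSpace ℝ (Fin (n i)) →L[ℝ] EuclideanSpace ℝ (Fin m))
    -- `sp` is a global minimizer of `q_β(s) = φ̄^i(s;x) + (β/2)‖s − x^i‖²`
    (sp : EuclideanSpace ℝ (Fin (n i)))
    (hmin : ∀ t,
      (f x + ⟪gif, sp - x i⟫ + h (F x + GiF (sp - x i)) + g i sp)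
          + β / 2 * ‖sp - x i‖ ^ 2
        ≤ (f x + ⟪gif, t - x i⟫ + h (F x + GiF (t - x i)) + g i t)
          + β / 2 * ‖t - x i‖ ^ 2) :
    f x + ⟪gif, sp - x i⟫ + h (F x + GiF (sp - x i)) + g i sp
      ≤ (f x + h (F x) + ∑ j, g j (x j))
        - (∑ j ∈ Finset.univ.erase i, g j (x j))
        - β * ‖upd x i sp - x‖ ^ 2 := by
  have hq := (convexOn_linearized_model hhconv (hg i) (f x) gif (F x) GiF.toLinearMap
    (x i)).strongConvexOn_add_sq_norm_sub β (x i)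
  have hgrowth := hq.add_sq_norm_sub_le_of_isMinOn (isMinOn_univ_iff.2 hmin) (mem_univ sp)
    (mem_univ (x i))
  simp only [ContinuousLinearMap.coe_coe, sub_self, inner_zero_right, map_zero, add_zero,
    norm_zero, norm_sub_rev (x i) sp, zero_pow two_ne_zero, mul_zero] at hgrowth
  rw [norm_upd_sub, ← Finset.add_sum_erase _ _ (Finset.mem_univ i)]
  linarith

/-- at a global minimizer `sp` of the regularized block model
`q_β(s) = φ̄^i(s;x) + (β/2)‖s − x^i‖²`, setting `x₊ = x[i ↦ sp]`, one has
`φ̄^i(sp;x) ≤ φ(x) − Σ_{j ≠ i} g_j(x^j) − β‖x₊ − x‖²`. -/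
theorem model_decrease_at_minimizer
    {b m : ℕ} (hb : 0 < b) (hm : 0 < m) {n : Fin b → ℕ} (hn : ∀ i, 0 < n i)
    (f : PiLp 2 (fun i => EuclideanSpace ℝ (Fin (n i))) → ℝ)
    (hf : Differentiable ℝ f)
    (F : PiLp 2 (fun i => EuclideanSpace ℝ (Fin (n i))) → EuclideanSpace ℝ (Fin m))
    (hF : Differentiable ℝ F)
    (h : EuclideanSpace ℝ (Fin m) → ℝ)
    (hhconv : ConvexOn ℝ Set.univ h) (hhdiff : Differentiable ℝ h)
    (Lh : ℝ) (hLh : 0 < Lh)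
    (gradh : EuclideanSpace ℝ (Fin m) → EuclideanSpace ℝ (Fin m))
    (hgradh : ∀ u, HasGradientAt h (gradh u) u)
    (hgradhLip : ∀ u v, ‖gradh u - gradh v‖ ≤ Lh * ‖u - v‖)
    (g : (i : Fin b) → EuclideanSpace ℝ (Fin (n i)) → ℝ)
    (hg : ∀ i, ConvexOn ℝ Set.univ (g i))
    (x : PiLp 2 (fun i => EuclideanSpace ℝ (Fin (n i)))) (i : Fin b)
    (β : ℝ) (hβ : 0 < β)
    -- `gif = ∇_i f(x)` is the gradient at `x^i` of `s ↦ f(x[i ↦ s])`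
    (gif : EuclideanSpace ℝ (Fin (n i)))
    (hgif : HasGradientAt (fun s => f (upd x i s)) gif (x i))
    -- `GiF = ∇_i F(x)` is the Fréchet derivative at `x^i` of `s ↦ F(x[i ↦ s])`
    (GiF : EuclideanSpace ℝ (Fin (n i)) →L[ℝ] EuclideanSpace ℝ (Fin m))
    (hGiF : HasFDerivAt (fun s => F (upd x i s)) GiF (x i))
    -- `sp` is a global minimizer of `q_β(s) = φ̄^i(s;x) + (β/2)‖s − x^i‖²`
    (sp : EuclideanSpace ℝ (Fin (n i)))
    (hmin : ∀ t,
      (f x + ⟪gif, sp - x i⟫ + h (F x + GiF (sp - x i)) + g i sp)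
          + β / 2 * ‖sp - x i‖ ^ 2
        ≤ (f x + ⟪gif, t - x i⟫ + h (F x + GiF (t - x i)) + g i t)
          + β / 2 * ‖t - x i‖ ^ 2) :
    f x + ⟪gif, sp - x i⟫ + h (F x + GiF (sp - x i)) + g i sp
      ≤ (f x + h (F x) + ∑ j, g j (x j))
        - (∑ j ∈ Finset.univ.erase i, g j (x j))
        - β * ‖upd x i sp - x‖ ^ 2 :=
  model_decrease_at_minimizer_general f F h hhconv g hg x i β gif GiF sp hmin
end

section
/- In the block composite setting, fix x ∈ E, a block index i, and β > 0. Let C ⊆ E be a convex set containing x and x₊, and suppose ∇_i f is L^f_i-Lipschitz on C and ∇_i F is L^F_i-Lipschitz on C (operator norm), with L^F_i > 0 and β > L^f_i. Assume β ≥ L^f_i + L^F_i √(2 L_h) √(φ(x) − φ^*). Let s₊ be a global minimizer over ℝ^{n_i} of q_β(s) = φ̄^i(s;x) + (β/2)‖s − x^i‖² and set x₊ = x[i↦s₊]. Then h(F(x₊)) − h(l^i_F(s₊;x)) ≤ ((β − L^f_i)/2)‖x₊ − x‖² − (3 L_h (L^F_i)²/8)‖x₊ − x‖⁴. -/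
/-!
Write `t = ‖x₊ - x‖`, `ℓ = l^i_F(s₊;x)` and `u = ∇h(ℓ)`. The model `q_β` is `β`-strongly
convex, so comparing its value at `x^i` with the one at the minimizer `s₊`, together with the
descent lemma for `f` along block `i` and the lower bounds, gives
`h(ℓ) - h^* ≤ φ(x) - φ^* - (β - L^f_i / 2) t²`. The Polyak–Łojasiewicz-type bound
`‖u‖² ≤ 2 L_h (h(ℓ) - h^*)` and the step-size condition then yield
`L^F_i ‖u‖ ≤ β - L^f_i - L_h (L^F_i)² t²`. Finally the descent lemma for `h` and the
second-order Taylor bound `‖F(x₊) - ℓ‖ ≤ (L^F_i / 2) t²` give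
`h(F(x₊)) - h(ℓ) ≤ ‖u‖ ‖F(x₊) - ℓ‖ + (L_h / 2) ‖F(x₊) - ℓ‖²`, which is at most the claimed bound.
-/

open scoped RealInnerProductSpace
open Set Filter Topology

theorem norm_sub_sub_fderiv_le_of_lipschitz_on_segment
    {X Y : Type*} [NormedAddCommGroup X] [NormedSpace ℝ X]
    [NormedAddCommGroup Y] [NormedSpace ℝ Y]
    {φ : X → Y} {φ' : X → X →L[ℝ] Y} {a b : X} {L : ℝ}
    (hφ : ∀ s ∈ segment ℝ a b, HasFDerivAt φ (φ' s) s)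
    (hφ' : ∀ s ∈ segment ℝ a b, ‖φ' s - φ' a‖ ≤ L * ‖s - a‖) :
    ‖φ b - φ a - φ' a (b - a)‖ ≤ L / 2 * ‖b - a‖ ^ 2 := by
  set v := b - a
  have hmem : ∀ τ ∈ Icc (0 : ℝ) 1, a + τ • v ∈ segment ℝ a b := fun τ hτ => by
    rw [segment_eq_image']; exact mem_image_of_mem _ hτ
  have hγ : ∀ τ ∈ Icc (0 : ℝ) 1, HasDerivAt (fun τ : ℝ => φ (a + τ • v) - φ a - τ • φ' a v)
      ((φ' (a + τ • v) - φ' a) v) τ := by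
    intro τ hτ
    have hline : HasDerivAt (fun τ : ℝ => a + τ • v) v τ := by
      simpa using ((hasDerivAt_id τ).smul_const v).const_add a
    exact ((((hφ _ (hmem τ hτ)).comp_hasDerivAt τ hline).sub_const (φ a)).sub
      ((hasDerivAt_id τ).smul_const (φ' a v))).congr_deriv (by simp)
  have hB : ∀ τ : ℝ, HasDerivAt (fun τ => L / 2 * ‖v‖ ^ 2 * τ ^ 2) (L * ‖v‖ ^ 2 * τ) τ := by
    intro τ
    exact ((hasDerivAt_pow 2 τ).const_mul (L / 2 * ‖v‖ ^ 2)).congr_deriv (by push_cast; ring)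
  have hbound : ∀ τ ∈ Ico (0 : ℝ) 1, ‖(φ' (a + τ • v) - φ' a) v‖ ≤ L * ‖v‖ ^ 2 * τ := by
    intro τ hτ
    calc ‖(φ' (a + τ • v) - φ' a) v‖ ≤ ‖φ' (a + τ • v) - φ' a‖ * ‖v‖ :=
          ContinuousLinearMap.le_opNorm _ _
      _ ≤ L * ‖a + τ • v - a‖ * ‖v‖ := by gcongr; exact hφ' _ (hmem τ (Ico_subset_Icc_self hτ))
      _ = L * ‖v‖ ^ 2 * τ := by
        rw [add_sub_cancel_left, norm_smul, Real.norm_of_nonneg hτ.1]; ring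
  simpa [v] using image_norm_le_of_norm_deriv_right_le_deriv_boundary
    (fun τ hτ => (hγ τ hτ).continuousAt.continuousWithinAt)
    (fun τ hτ => (hγ τ (Ico_subset_Icc_self hτ)).hasDerivWithinAt) (by simp) hB hbound
    (right_mem_Icc.2 zero_le_one)

theorem le_add_inner_add_of_lipschitz_on_segment
    {X : Type*} [NormedAddCommGroup X] [InnerProductSpace ℝ X] [CompleteSpace X]
    {φ : X → ℝ} {φ' : X → X} {a b : X} {L : ℝ}
    (hφ : ∀ s ∈ segment ℝ a b, HasGradientAt φ (φ' s) s)
    (hφ' : ∀ s ∈ segment ℝ a b, ‖φ' s - φ' a‖ ≤ L * ‖s - a‖) :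
    φ b ≤ φ a + ⟪φ' a, b - a⟫ + L / 2 * ‖b - a‖ ^ 2 := by
  have := norm_sub_sub_fderiv_le_of_lipschitz_on_segment
    (φ' := fun s => InnerProductSpace.toDual ℝ X (φ' s)) (fun s hs => (hφ s hs).hasFDerivAt)
    (fun s hs => by rw [← map_sub, LinearIsometryEquiv.norm_map]; exact hφ' s hs)
  rw [InnerProductSpace.toDual_apply_apply] at this
  rw [Real.norm_eq_abs] at this
  linarith [le_abs_self (φ b - φ a - ⟪φ' a, b - a⟫)]

theorem sub_le_norm_mul_add_of_lipschitz_gradient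
    {X : Type*} [NormedAddCommGroup X] [InnerProductSpace ℝ X] [CompleteSpace X]
    {φ : X → ℝ} {φ' : X → X} {L : ℝ} (hφ : ∀ u, HasGradientAt φ (φ' u) u)
    (hφ' : ∀ u v, ‖φ' u - φ' v‖ ≤ L * ‖u - v‖) (u w : X) :
    φ w - φ u ≤ ‖φ' u‖ * ‖w - u‖ + L / 2 * ‖w - u‖ ^ 2 := by
  have := le_add_inner_add_of_lipschitz_on_segment (a := u) (b := w)
    (fun s _ => hφ s) (fun s _ => hφ' s u)
  linarith [real_inner_le_norm (φ' u) (w - u)]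

theorem sq_norm_le_two_mul_sub_of_lipschitz_gradient
    {X : Type*} [NormedAddCommGroup X] [InnerProductSpace ℝ X] [CompleteSpace X]
    {φ : X → ℝ} {φ' : X → X} {L m : ℝ} (hL : 0 < L)
    (hφ : ∀ u, HasGradientAt φ (φ' u) u) (hφ' : ∀ u v, ‖φ' u - φ' v‖ ≤ L * ‖u - v‖)
    (hm : ∀ u, m ≤ φ u) (u : X) :
    ‖φ' u‖ ^ 2 ≤ 2 * L * (φ u - m) := by
  -- one gradient step of length `1 / L` decreases `φ` by at least `‖φ' u‖² / (2L)`
  have hstep := le_add_inner_add_of_lipschitz_on_segment (a := u) (b := u - L⁻¹ • φ' u)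
    (fun s _ => hφ s) (fun s _ => hφ' s u)
  rw [sub_sub_cancel_left, inner_neg_right, real_inner_smul_right, real_inner_self_eq_norm_sq,
    norm_neg, norm_smul, Real.norm_of_nonneg (inv_nonneg.2 hL.le)] at hstep
  have hdecr : φ (u - L⁻¹ • φ' u) ≤ φ u - ‖φ' u‖ ^ 2 / (2 * L) := by
    convert hstep using 1
    field_simp
    ring
  calc ‖φ' u‖ ^ 2 = 2 * L * (‖φ' u‖ ^ 2 / (2 * L)) := by field_simp
    _ ≤ 2 * L * (φ u - m) := by gcongr; linarith [hm (u - L⁻¹ • φ' u)]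

theorem ConvexOn.add_mul_sq_norm_sub_le_of_isMinOn
    {X : Type*} [NormedAddCommGroup X] [NormedSpace ℝ X] {ψ : X → ℝ} (hψ : ConvexOn ℝ univ ψ)
    {a s : X} {β : ℝ} (hs : IsMinOn (fun y => ψ y + β / 2 * ‖y - a‖ ^ 2) univ s) :
    ψ s + β * ‖s - a‖ ^ 2 ≤ ψ a := by
  set T := ‖s - a‖ ^ 2
  have hθ : ∀ θ ∈ Ioc (0 : ℝ) 1, ψ s + β * T - β * T / 2 * θ ≤ ψ a := by
    rintro θ ⟨hθ0, hθ1⟩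
    have hconv := hψ.2 (mem_univ s) (mem_univ a) (sub_nonneg.2 hθ1) hθ0.le (by ring)
    have hmin := isMinOn_univ_iff.1 hs ((1 - θ) • s + θ • a)
    have hnorm : ‖(1 - θ) • s + θ • a - a‖ ^ 2 = (1 - θ) ^ 2 * T := by
      rw [show (1 - θ) • s + θ • a - a = (1 - θ) • (s - a) by module, norm_smul,
        Real.norm_of_nonneg (sub_nonneg.2 hθ1), mul_pow]
    simp only [smul_eq_mul, hnorm] at hconv hmin
    nlinarith
  have hlim : Tendsto (fun θ => ψ s + β * T - β * T / 2 * θ) (𝓝[>] 0) (𝓝 (ψ s + β * T)) := by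
    have : Continuous fun θ : ℝ => ψ s + β * T - β * T / 2 * θ := by fun_prop
    simpa using (this.tendsto 0).mono_left nhdsWithin_le_nhds
  exact le_of_tendsto hlim (eventually_of_mem (Ioc_mem_nhdsGT one_pos) hθ)

theorem ConvexOn.const_add_inner_add_comp_add
    {X Y : Type*} [NormedAddCommGroup X] [InnerProductSpace ℝ X]
    [NormedAddCommGroup Y] [NormedSpace ℝ Y] {h : Y → ℝ} {g : X → ℝ}
    (hh : ConvexOn ℝ univ h) (hg : ConvexOn ℝ univ g) (c : ℝ) (v a : X) (u : Y) (A : X →L[ℝ] Y) :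
    ConvexOn ℝ univ fun s => c + ⟪v, s - a⟫ + h (u + A (s - a)) + g s := by
  let e : X →ᵃ[ℝ] Y := ⟨fun s => u + A (s - a), A.toLinearMap, fun p w => by
    simp only [vadd_eq_add, map_sub, map_add, ContinuousLinearMap.coe_coe]; abel⟩
  let ℓ : X →ᵃ[ℝ] ℝ := ⟨fun s => c + ⟪v, s - a⟫, innerₛₗ ℝ v, fun p w => by
    simp only [vadd_eq_add, inner_sub_right, inner_add_right, innerₛₗ_apply_apply]; ring⟩
  exact (((convexOn_id convex_univ).comp_affineMap ℓ).add (hh.comp_affineMap e)).add hg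

theorem mul_le_sub_sub_of_sq_le_two_mul {β Lf LF Lh A D t u : ℝ} (hLf : 0 ≤ Lf) (hβ : Lf < β)
    (hLF : 0 ≤ LF) (hLh : 0 < Lh) (hA : Lf + LF * √(2 * Lh) * √A ≤ β)
    (hD : D ≤ A - (β - Lf / 2) * t ^ 2) (huD : u ^ 2 ≤ 2 * Lh * D) :
    LF * u ≤ β - Lf - Lh * LF ^ 2 * t ^ 2 := by
  set c := LF * √(2 * Lh)
  have hc2 : c ^ 2 = 2 * Lh * LF ^ 2 := by rw [mul_pow, Real.sq_sqrt (by positivity)]; ring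
  have hD0 : 0 ≤ D := nonneg_of_mul_nonneg_right ((sq_nonneg u).trans huD) (by positivity)
  have hA0 : 0 ≤ A := by nlinarith [sq_nonneg t]
  have hcA : c ^ 2 * A ≤ (β - Lf) ^ 2 := by
    rw [← Real.sq_sqrt hA0, ← mul_pow]
    exact pow_le_pow_left₀ (by positivity) (by linarith) 2
  have hct : c ^ 2 * t ^ 2 ≤ β - Lf := by
    refine le_of_mul_le_mul_right ?_ (sub_pos.2 hβ)
    nlinarith [mul_nonneg (sq_nonneg c) hD0,
      mul_nonneg (mul_nonneg (sq_nonneg c) (sq_nonneg t)) hLf]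
  have hsq : (LF * u) ^ 2 ≤ (β - Lf - c ^ 2 * t ^ 2 / 2) ^ 2 :=
    calc (LF * u) ^ 2 ≤ LF ^ 2 * (2 * Lh * D) := by rw [mul_pow]; gcongr
      _ = c ^ 2 * D := by rw [hc2]; ring
      _ ≤ c ^ 2 * (A - (β - Lf / 2) * t ^ 2) := by gcongr
      _ ≤ (β - Lf - c ^ 2 * t ^ 2 / 2) ^ 2 := by
        nlinarith [mul_nonneg (mul_nonneg (sq_nonneg c) (sq_nonneg t)) hLf,
          sq_nonneg (c ^ 2 * t ^ 2)]
  calc LF * u ≤ β - Lf - c ^ 2 * t ^ 2 / 2 := (abs_le_of_sq_le_sq' hsq (by linarith)).2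
    _ = β - Lf - Lh * LF ^ 2 * t ^ 2 := by rw [hc2]; ring

theorem mul_add_half_mul_sq_le {β Lf LF Lh t u e : ℝ} (hLh : 0 ≤ Lh) (hu : 0 ≤ u) (he0 : 0 ≤ e)
    (he : e ≤ LF / 2 * t ^ 2) (hLFu : LF * u ≤ β - Lf - Lh * LF ^ 2 * t ^ 2) :
    u * e + Lh / 2 * e ^ 2 ≤ (β - Lf) / 2 * t ^ 2 - 3 * Lh * LF ^ 2 / 8 * t ^ 4 :=
  calc u * e + Lh / 2 * e ^ 2 ≤ u * (LF / 2 * t ^ 2) + Lh / 2 * (LF / 2 * t ^ 2) ^ 2 := by gcongr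
    _ = LF * u * (t ^ 2 / 2) + Lh / 2 * (LF / 2 * t ^ 2) ^ 2 := by ring
    _ ≤ (β - Lf - Lh * LF ^ 2 * t ^ 2) * (t ^ 2 / 2) + Lh / 2 * (LF / 2 * t ^ 2) ^ 2 := by
        gcongr
    _ = (β - Lf) / 2 * t ^ 2 - 3 * Lh * LF ^ 2 / 8 * t ^ 4 := by ring

section BlockUpdate

variable {b : ℕ} {n : Fin b → ℕ}

local notation "𝔼" => PiLp 2 (fun i => EuclideanSpace ℝ (Fin (n i)))

@[simp]
theorem upd_apply_self (x : 𝔼) (i : Fin b) (s : EuclideanSpace ℝ (Fin (n i))) :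
    upd x i s i = s := by
  simp [upd]

theorem upd_apply_of_ne (x : 𝔼) {i j : Fin b} (s : EuclideanSpace ℝ (Fin (n i))) (hj : j ≠ i) :
    upd x i s j = x j := by
  simp [upd, Function.update_of_ne hj]

@[simp]
theorem upd_self (x : 𝔼) (i : Fin b) : upd x i (x i) = x := by
  simp [upd]

@[simp]
theorem upd_upd (x : 𝔼) (i : Fin b) (s s' : EuclideanSpace ℝ (Fin (n i))) :
    upd (upd x i s) i s' = upd x i s' := by
  simp [upd]

theorem norm_upd_sub_upd (x : 𝔼) (i : Fin b) (s s' : EuclideanSpace ℝ (Fin (n i))) :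
    ‖upd x i s - upd x i s'‖ = ‖s - s'‖ := by
  have : upd x i s - upd x i s' = PiLp.single 2 i (s - s') := by
    ext j : 1
    by_cases hj : j = i
    · subst hj; simp
    · simp [upd_apply_of_ne _ _ hj, hj]
  rw [this, PiLp.norm_single]

theorem upd_mem_segment (x : 𝔼) {i : Fin b} {a c s : EuclideanSpace ℝ (Fin (n i))}
    (hs : s ∈ segment ℝ a c) : upd x i s ∈ segment ℝ (upd x i a) (upd x i c) := by
  obtain ⟨p, q, hp, hq, hpq, rfl⟩ := hs
  refine ⟨p, q, hp, hq, hpq, ?_⟩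
  ext j : 1
  by_cases hj : j = i
  · subst hj; simp
  · simp [upd_apply_of_ne _ _ hj, ← add_smul, hpq]

theorem sum_upd_apply (g : (i : Fin b) → EuclideanSpace ℝ (Fin (n i)) → ℝ) (x : 𝔼) (i : Fin b)
    (s : EuclideanSpace ℝ (Fin (n i))) :
    ∑ j, g j (upd x i s j) = ∑ j, g j (x j) - g i (x i) + g i s := by
  rw [← Finset.add_sum_erase _ _ (Finset.mem_univ i),
    ← Finset.add_sum_erase _ _ (Finset.mem_univ i),
    Finset.sum_congr rfl fun j hj => by rw [upd_apply_of_ne _ _ (Finset.ne_of_mem_erase hj)]]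
  simp only [upd_apply_self]
  ring

theorem hasFDerivAt_comp_upd {Y : Type*} [NormedAddCommGroup Y] [NormedSpace ℝ Y]
    {F : 𝔼 → Y} {i : Fin b} {G : 𝔼 → EuclideanSpace ℝ (Fin (n i)) →L[ℝ] Y}
    (hG : ∀ y, HasFDerivAt (fun s => F (upd y i s)) (G y) (y i)) (x : 𝔼)
    (s : EuclideanSpace ℝ (Fin (n i))) :
    HasFDerivAt (fun s => F (upd x i s)) (G (upd x i s)) s := by
  simpa using hG (upd x i s)

theorem Convex.upd_mem {C : Set 𝔼} (hC : Convex ℝ C) {x : 𝔼} {i : Fin b}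
    {s r : EuclideanSpace ℝ (Fin (n i))} (hx : x ∈ C) (hs : upd x i s ∈ C)
    (hr : r ∈ segment ℝ (x i) s) : upd x i r ∈ C :=
  hC.segment_subset hx hs (by simpa using upd_mem_segment x hr)

theorem norm_comp_upd_sub_sub_le {Y : Type*} [NormedAddCommGroup Y] [NormedSpace ℝ Y]
    {F : 𝔼 → Y} {i : Fin b} {G : 𝔼 → EuclideanSpace ℝ (Fin (n i)) →L[ℝ] Y}
    (hG : ∀ y, HasFDerivAt (fun s => F (upd y i s)) (G y) (y i)) {C : Set 𝔼} (hC : Convex ℝ C)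
    {L : ℝ} (hL : ∀ y ∈ C, ∀ z ∈ C, ‖G y - G z‖ ≤ L * ‖y - z‖) {x : 𝔼}
    {s : EuclideanSpace ℝ (Fin (n i))} (hx : x ∈ C) (hs : upd x i s ∈ C) :
    ‖F (upd x i s) - F x - G x (s - x i)‖ ≤ L / 2 * ‖s - x i‖ ^ 2 := by
  simpa using norm_sub_sub_fderiv_le_of_lipschitz_on_segment
    (φ := fun r => F (upd x i r)) (φ' := fun r => G (upd x i r))
    (fun r _ => hasFDerivAt_comp_upd hG x r)
    (fun r hr => (hL _ (hC.upd_mem hx hs hr) _ (by simpa using hx)).trans_eq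
      (by rw [norm_upd_sub_upd]))

theorem comp_upd_le_add_inner_add {f : 𝔼 → ℝ} {i : Fin b} {G : 𝔼 → EuclideanSpace ℝ (Fin (n i))}
    (hG : ∀ y, HasGradientAt (fun s => f (upd y i s)) (G y) (y i)) {C : Set 𝔼} (hC : Convex ℝ C)
    {L : ℝ} (hL : ∀ y ∈ C, ∀ z ∈ C, ‖G y - G z‖ ≤ L * ‖y - z‖) {x : 𝔼}
    {s : EuclideanSpace ℝ (Fin (n i))} (hx : x ∈ C) (hs : upd x i s ∈ C) :
    f (upd x i s) ≤ f x + ⟪G x, s - x i⟫ + L / 2 * ‖s - x i‖ ^ 2 := by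
  simpa using le_add_inner_add_of_lipschitz_on_segment
    (φ := fun r => f (upd x i r)) (φ' := fun r => G (upd x i r))
    (fun r _ => hasGradientAt_iff_hasFDerivAt.2
      (hasFDerivAt_comp_upd (fun y => (hG y).hasFDerivAt) x r))
    (fun r hr => (hL _ (hC.upd_mem hx hs hr) _ (by simpa using hx)).trans_eq
      (by rw [norm_upd_sub_upd]))

end BlockUpdate

theorem composite_linearization_error_bound_general
    {b m : ℕ} {n : Fin b → ℕ}
    (f : PiLp 2 (fun i => EuclideanSpace ℝ (Fin (n i))) → ℝ)
    (F : PiLp 2 (fun i => EuclideanSpace ℝ (Fin (n i))) → EuclideanSpace ℝ (Fin m))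
    (h : EuclideanSpace ℝ (Fin m) → ℝ)
    (hhconv : ConvexOn ℝ Set.univ h)
    (Lh : ℝ) (hLh : 0 < Lh)
    (gradh : EuclideanSpace ℝ (Fin m) → EuclideanSpace ℝ (Fin m))
    (hgradh : ∀ u, HasGradientAt h (gradh u) u)
    (hgradhLip : ∀ u v, ‖gradh u - gradh v‖ ≤ Lh * ‖u - v‖)
    (g : (i : Fin b) → EuclideanSpace ℝ (Fin (n i)) → ℝ)
    (hg : ∀ i, ConvexOn ℝ Set.univ (g i))
    -- lower bounds `f ≥ f^*`, `h ≥ h^*`, `Σᵢ gᵢ ≥ g^*`; `φ^* = f^* + h^* + g^*`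
    (fstar hstar gstar : ℝ)
    (hfstar : ∀ y, fstar ≤ f y) (hhstar : ∀ u, hstar ≤ h u)
    (hgstar : ∀ y : PiLp 2 (fun i => EuclideanSpace ℝ (Fin (n i))), gstar ≤ ∑ j, g j (y j))
    (x : PiLp 2 (fun i => EuclideanSpace ℝ (Fin (n i)))) (i : Fin b)
    (β Lf LF : ℝ) (hβLf : Lf < β)
    -- `gif y = ∇_i f(y)`, the gradient at `y^i` of `s ↦ f(y[i ↦ s])`
    (gif : PiLp 2 (fun i => EuclideanSpace ℝ (Fin (n i))) → EuclideanSpace ℝ (Fin (n i)))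
    (hgif : ∀ y, HasGradientAt (fun s => f (upd y i s)) (gif y) (y i))
    -- `GiF y = ∇_i F(y)`, the Fréchet derivative at `y^i` of `s ↦ F(y[i ↦ s])`
    (GiF : PiLp 2 (fun i => EuclideanSpace ℝ (Fin (n i))) →
      (EuclideanSpace ℝ (Fin (n i)) →L[ℝ] EuclideanSpace ℝ (Fin m)))
    (hGiF : ∀ y, HasFDerivAt (fun s => F (upd y i s)) (GiF y) (y i))
    -- step-size condition `β ≥ L^f_i + L^F_i √(2 L_h) √(φ(x) − φ^*)`
    (hβcond : Lf + LF * Real.sqrt (2 * Lh) *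
        Real.sqrt ((f x + h (F x) + ∑ j, g j (x j)) - (fstar + hstar + gstar)) ≤ β)
    -- `sp` is a global minimizer of `q_β(s) = φ̄^i(s;x) + (β/2)‖s − x^i‖²`
    (sp : EuclideanSpace ℝ (Fin (n i)))
    (hmin : ∀ t,
      (f x + ⟪gif x, sp - x i⟫ + h (F x + GiF x (sp - x i)) + g i sp)
          + β / 2 * ‖sp - x i‖ ^ 2
        ≤ (f x + ⟪gif x, t - x i⟫ + h (F x + GiF x (t - x i)) + g i t)
          + β / 2 * ‖t - x i‖ ^ 2)
    -- `C` is a convex set containing `x` and `x₊ = x[i ↦ sp]`, on which the block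
    -- gradients of `f` and `F` are Lipschitz
    (C : Set (PiLp 2 (fun i => EuclideanSpace ℝ (Fin (n i)))))
    (hC : Convex ℝ C) (hxC : x ∈ C) (hxpC : upd x i sp ∈ C)
    (hgifLip : ∀ y ∈ C, ∀ z ∈ C, ‖gif y - gif z‖ ≤ Lf * ‖y - z‖)
    (hGiFLip : ∀ y ∈ C, ∀ z ∈ C, ‖GiF y - GiF z‖ ≤ LF * ‖y - z‖) :
    h (F (upd x i sp)) - h (F x + GiF x (sp - x i))
      ≤ (β - Lf) / 2 * ‖upd x i sp - x‖ ^ 2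
        - 3 * Lh * LF ^ 2 / 8 * ‖upd x i sp - x‖ ^ 4 := by
  set xp := upd x i sp
  have hdist : ‖xp - x‖ = ‖sp - x i‖ := by simpa using norm_upd_sub_upd x i sp (x i)
  rw [hdist]
  set t := ‖sp - x i‖
  rcases (norm_nonneg (sp - x i)).eq_or_lt with ht | ht
  · obtain rfl : sp = x i := sub_eq_zero.1 (norm_eq_zero.1 ht.symm)
    simp [xp, t]
  set lF := F x + GiF x (sp - x i)
  have hLf : 0 ≤ Lf :=
    nonneg_of_mul_nonneg_left ((norm_nonneg _).trans (hdist ▸ hgifLip xp hxpC x hxC)) ht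
  have hLF : 0 ≤ LF :=
    nonneg_of_mul_nonneg_left ((norm_nonneg _).trans (hdist ▸ hGiFLip xp hxpC x hxC)) ht
  have hFxp : ‖F xp - lF‖ ≤ LF / 2 * t ^ 2 := by
    simpa [lF, sub_sub] using norm_comp_upd_sub_sub_le hGiF hC hGiFLip hxC hxpC
  have hfxp := comp_upd_le_add_inner_add hgif hC hgifLip hxC hxpC
  have hmodel : ⟪gif x, sp - x i⟫ + h lF + g i sp + β * t ^ 2 ≤ h (F x) + g i (x i) := by
    have := (ConvexOn.const_add_inner_add_comp_add hhconv (hg i) (f x) (gif x) (x i) (F x)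
      (GiF x)).add_mul_sq_norm_sub_le_of_isMinOn (isMinOn_univ_iff.2 hmin)
    simp only [sub_self, map_zero, add_zero, inner_zero_right] at this
    linarith
  have hD : h lF - hstar ≤ (f x + h (F x) + ∑ j, g j (x j)) - (fstar + hstar + gstar)
      - (β - Lf / 2) * t ^ 2 := by
    linarith [hfstar xp, hgstar xp, sum_upd_apply g x i sp]
  have hgrad := mul_le_sub_sub_of_sq_le_two_mul hLf hβLf hLF hLh hβcond hD
    (sq_norm_le_two_mul_sub_of_lipschitz_gradient hLh hgradh hgradhLip hhstar lF)
  exact (sub_le_norm_mul_add_of_lipschitz_gradient hgradh hgradhLip lF (F xp)).trans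
    (mul_add_half_mul_sq_le hLh.le (norm_nonneg _) (norm_nonneg _) hFxp hgrad)

/-- estimate (10) in Lemma 3.1: under the step-size condition
`β ≥ L^f_i + L^F_i √(2L_h) √(φ(x) − φ^*)`, at a global minimizer `sp` of the
regularized block model, with `x₊ = x[i ↦ sp]`,
`h(F(x₊)) − h(l^i_F(sp;x)) ≤ ((β − L^f_i)/2)‖x₊ − x‖² − (3L_h(L^F_i)²/8)‖x₊ − x‖⁴`. -/
theorem composite_linearization_error_bound
    {b m : ℕ} (hb : 0 < b) (hm : 0 < m) {n : Fin b → ℕ} (hn : ∀ i, 0 < n i)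
    (f : PiLp 2 (fun i => EuclideanSpace ℝ (Fin (n i))) → ℝ)
    (hf : Differentiable ℝ f)
    (F : PiLp 2 (fun i => EuclideanSpace ℝ (Fin (n i))) → EuclideanSpace ℝ (Fin m))
    (hF : Differentiable ℝ F)
    (h : EuclideanSpace ℝ (Fin m) → ℝ)
    (hhconv : ConvexOn ℝ Set.univ h) (hhdiff : Differentiable ℝ h)
    (Lh : ℝ) (hLh : 0 < Lh)
    (gradh : EuclideanSpace ℝ (Fin m) → EuclideanSpace ℝ (Fin m))
    (hgradh : ∀ u, HasGradientAt h (gradh u) u)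
    (hgradhLip : ∀ u v, ‖gradh u - gradh v‖ ≤ Lh * ‖u - v‖)
    (g : (i : Fin b) → EuclideanSpace ℝ (Fin (n i)) → ℝ)
    (hg : ∀ i, ConvexOn ℝ Set.univ (g i))
    -- lower bounds `f ≥ f^*`, `h ≥ h^*`, `Σᵢ gᵢ ≥ g^*`; `φ^* = f^* + h^* + g^*`
    (fstar hstar gstar : ℝ)
    (hfstar : ∀ y, fstar ≤ f y) (hhstar : ∀ u, hstar ≤ h u)
    (hgstar : ∀ y : PiLp 2 (fun i => EuclideanSpace ℝ (Fin (n i))), gstar ≤ ∑ j, g j (y j))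
    (x : PiLp 2 (fun i => EuclideanSpace ℝ (Fin (n i)))) (i : Fin b)
    (β Lf LF : ℝ) (hβ : 0 < β) (hLF : 0 < LF) (hβLf : Lf < β)
    -- `gif y = ∇_i f(y)`, the gradient at `y^i` of `s ↦ f(y[i ↦ s])`
    (gif : PiLp 2 (fun i => EuclideanSpace ℝ (Fin (n i))) → EuclideanSpace ℝ (Fin (n i)))
    (hgif : ∀ y, HasGradientAt (fun s => f (upd y i s)) (gif y) (y i))
    -- `GiF y = ∇_i F(y)`, the Fréchet derivative at `y^i` of `s ↦ F(y[i ↦ s])`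
    (GiF : PiLp 2 (fun i => EuclideanSpace ℝ (Fin (n i))) →
      (EuclideanSpace ℝ (Fin (n i)) →L[ℝ] EuclideanSpace ℝ (Fin m)))
    (hGiF : ∀ y, HasFDerivAt (fun s => F (upd y i s)) (GiF y) (y i))
    -- step-size condition `β ≥ L^f_i + L^F_i √(2 L_h) √(φ(x) − φ^*)`
    (hβcond : Lf + LF * Real.sqrt (2 * Lh) *
        Real.sqrt ((f x + h (F x) + ∑ j, g j (x j)) - (fstar + hstar + gstar)) ≤ β)
    -- `sp` is a global minimizer of `q_β(s) = φ̄^i(s;x) + (β/2)‖s − x^i‖²`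
    (sp : EuclideanSpace ℝ (Fin (n i)))
    (hmin : ∀ t,
      (f x + ⟪gif x, sp - x i⟫ + h (F x + GiF x (sp - x i)) + g i sp)
          + β / 2 * ‖sp - x i‖ ^ 2
        ≤ (f x + ⟪gif x, t - x i⟫ + h (F x + GiF x (t - x i)) + g i t)
          + β / 2 * ‖t - x i‖ ^ 2)
    -- `C` is a convex set containing `x` and `x₊ = x[i ↦ sp]`, on which the block
    -- gradients of `f` and `F` are Lipschitz
    (C : Set (PiLp 2 (fun i => EuclideanSpace ℝ (Fin (n i)))))
    (hC : Convex ℝ C) (hxC : x ∈ C) (hxpC : upd x i sp ∈ C)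
    (hgifLip : ∀ y ∈ C, ∀ z ∈ C, ‖gif y - gif z‖ ≤ Lf * ‖y - z‖)
    (hGiFLip : ∀ y ∈ C, ∀ z ∈ C, ‖GiF y - GiF z‖ ≤ LF * ‖y - z‖) :
    h (F (upd x i sp)) - h (F x + GiF x (sp - x i))
      ≤ (β - Lf) / 2 * ‖upd x i sp - x‖ ^ 2
        - 3 * Lh * LF ^ 2 / 8 * ‖upd x i sp - x‖ ^ 4 :=
  composite_linearization_error_bound_general f F h hhconv Lh hLh gradh hgradh hgradhLip g hg fstar
    hstar gstar hfstar hhstar hgstar x i β Lf LF hβLf gif hgif GiF hGiF hβcond sp hmin C hC hxC hxpC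
    hgifLip hGiFLip
end

section
/- (Nonmonotone summability, deterministic core of Proposition 2.) Let E be a real normed space and φ : E → ℝ with φ(x) ≥ φ^* for all x. Let (x_k)_{k≥0} be a sequence in E, (R_k)_{k≥0} reals with R_0 = φ(x_0), (β_k)_{k≥1} reals with β_k ≥ β_min > 0, and (u_k)_{k≥1} reals with u_min ≤ u_k ≤ 1 for some u_min > 0, satisfying for all k ≥ 0: φ(x_{k+1}) ≤ R_k − (β_{k+1}/2)‖x_{k+1} − x_k‖² and R_{k+1} = (1 − u_{k+1})R_k + u_{k+1}φ(x_{k+1}). Then Σ_{k=0}^{∞} ‖x_{k+1} − x_k‖² ≤ 2(φ(x_0) − φ^*)/(u_min β_min), and consequently ‖x_{k+1} − x_k‖ → 0 as k → ∞. -/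
/-- Nonmonotone summability (deterministic core of Proposition 2): under the
nonmonotone acceptance test and merit update with `R_0 = φ(x_0)`,
`β_k ≥ βmin > 0` and `umin ≤ u_k ≤ 1` with `umin > 0`, and `φ` bounded below by
`φstar`, the squared step lengths are summable with sum at most
`2(φ(x_0) − φstar)/(umin βmin)`, and the step lengths tend to `0`. -/
theorem nonmonotone_decrease_summable_steps
    {E : Type*} [NormedAddCommGroup E] [NormedSpace ℝ E]
    (φ : E → ℝ) (φstar : ℝ) (hbound : ∀ x, φstar ≤ φ x)
    (x : ℕ → E) (R : ℕ → ℝ) (β u : ℕ → ℝ)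
    (βmin umin : ℝ) (hβmin : 0 < βmin) (humin : 0 < umin)
    (hR0 : R 0 = φ (x 0))
    (hβ : ∀ k, 1 ≤ k → βmin ≤ β k)
    (hu : ∀ k, 1 ≤ k → umin ≤ u k ∧ u k ≤ 1)
    (haccept : ∀ k, φ (x (k + 1)) ≤ R k - β (k + 1) / 2 * ‖x (k + 1) - x k‖ ^ 2)
    (hupdate : ∀ k, R (k + 1) = (1 - u (k + 1)) * R k + u (k + 1) * φ (x (k + 1))) :
    Summable (fun k => ‖x (k + 1) - x k‖ ^ 2) ∧
    (∑' k, ‖x (k + 1) - x k‖ ^ 2) ≤ 2 * (φ (x 0) - φstar) / (umin * βmin) ∧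
    Filter.Tendsto (fun k => ‖x (k + 1) - x k‖) Filter.atTop (nhds 0) := by
  set c : ℝ := umin * βmin / 2 with hc
  have hcpos : 0 < c := by positivity
  -- R is bounded below by φstar
  have hRlb : ∀ k, φstar ≤ R k := by
    intro k
    induction k with
    | zero => rw [hR0]; exact hbound _
    | succ n ih =>
      rw [hupdate n]
      obtain ⟨h1, h2⟩ := hu (n + 1) (Nat.le_add_left 1 n)
      have hu0 : 0 < u (n + 1) := lt_of_lt_of_le humin h1
      nlinarith [hbound (x (n + 1))]
  -- key decrease estimate
  have hkey : ∀ k, c * ‖x (k + 1) - x k‖ ^ 2 ≤ R k - R (k + 1) := by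
    intro k
    obtain ⟨h1, h2⟩ := hu (k + 1) (Nat.le_add_left 1 k)
    have hβk := hβ (k + 1) (Nat.le_add_left 1 k)
    have hacc := haccept k
    have hsq : (0:ℝ) ≤ ‖x (k + 1) - x k‖ ^ 2 := sq_nonneg _
    have hRk : R (k + 1) = (1 - u (k + 1)) * R k + u (k + 1) * φ (x (k + 1)) :=
      hupdate k
    set s := ‖x (k + 1) - x k‖ ^ 2
    have hupos : 0 < u (k + 1) := lt_of_lt_of_le humin h1
    have hA : βmin / 2 * s ≤ β (k + 1) / 2 * s := by nlinarith
    have hB : umin * (βmin / 2 * s) ≤ u (k + 1) * (β (k + 1) / 2 * s) :=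
      mul_le_mul h1 hA (by positivity) hupos.le
    have hC : u (k + 1) * (β (k + 1) / 2 * s) ≤ u (k + 1) * (R k - φ (x (k + 1))) :=
      mul_le_mul_of_nonneg_left (by linarith) hupos.le
    have hD : c * s = umin * (βmin / 2 * s) := by rw [hc]; ring
    nlinarith [hB, hC, hD]
  -- partial sums bound
  have hsum : ∀ n, ∑ i ∈ Finset.range n, ‖x (i + 1) - x i‖ ^ 2
      ≤ (φ (x 0) - φstar) / c := by
    intro n
    have htel : ∑ i ∈ Finset.range n, (R i - R (i + 1)) = R 0 - R n := by
      exact Finset.sum_range_sub' R n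
    have h1 : c * ∑ i ∈ Finset.range n, ‖x (i + 1) - x i‖ ^ 2 ≤ R 0 - R n := by
      rw [Finset.mul_sum, ← htel]
      exact Finset.sum_le_sum fun i _ => hkey i
    have h2 : R 0 - R n ≤ φ (x 0) - φstar := by
      have := hRlb n; rw [hR0]; linarith
    rw [le_div_iff₀ hcpos, mul_comm]
    linarith
  have hS : Summable (fun k => ‖x (k + 1) - x k‖ ^ 2) :=
    summable_of_sum_range_le (fun n => sq_nonneg _) hsum
  refine ⟨hS, ?_, ?_⟩
  · have ht : (∑' k, ‖x (k + 1) - x k‖ ^ 2) ≤ (φ (x 0) - φstar) / c :=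
      Summable.tsum_le_of_sum_range_le hS hsum
    calc (∑' k, ‖x (k + 1) - x k‖ ^ 2) ≤ (φ (x 0) - φstar) / c := ht
      _ = 2 * (φ (x 0) - φstar) / (umin * βmin) := by
          rw [hc]; field_simp
  · have h2 : Filter.Tendsto (fun k => ‖x (k + 1) - x k‖ ^ 2)
        Filter.atTop (nhds 0) := hS.tendsto_atTop_zero
    have h3 := (Real.continuous_sqrt.tendsto 0).comp h2
    simpa [Function.comp_def, Real.sqrt_sq (norm_nonneg _)] using h3
end
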